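/- (Theorem 3.1, boundedness) Assume f : ℝ → ℝ is continuous with f(0) = 0 and f(I) ≥ 0 for I ≥ 0, and let (S, I, R) be a solution of the discrete system (6) with positive initial data. Set μ̃ = min{μ, γ, δ} and G^k = Σ_{n=0}^{M} (S_n^k + I_n^k + R_n^k). Then the solution is uniformly bounded eventually: limsup_{k→∞} G^k ≤ (g·λ·(M+1) + G^0)·(1 + g·μ̃)/(g·μ̃)². -/

import Mathlib

open Filter Finset

/-- L1-scheme coefficient `b_j^{(β)} = (j+1)^β - j^β` (real powers). -/
noncomputable def bcoef (β : ℝ) (j : ℕ) : ℝ := ((j : ℝ) + 1) ^ β - (j : ℝ) ^ β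

/-- L1 discretization of the Caputo derivative of order `α` with time step `Δt`,
evaluated at time level `n ≥ 1`:
`δ_n^α f = ((Δt)^{-α}/Γ(2-α)) (f n - b_{n-1} f 0 - Σ_{j=1}^{n-1} (b_{j-1}-b_j) f (n-j))`. -/
noncomputable def L1 (α Δt : ℝ) (f : ℕ → ℝ) (n : ℕ) : ℝ :=
  Δt ^ (-α) / Real.Gamma (2 - α) *
    (f n - bcoef (1 - α) (n - 1) * f 0 -
      ∑ j ∈ Finset.Icc 1 (n - 1), (bcoef (1 - α) (j - 1) - bcoef (1 - α) j) * f (n - j))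


/-!
Positivity propagates in time by a discrete minimum principle: each step solves
`(1 + c) X - ρ ΔX = (history) + (source)` with `c, ρ ≥ 0` and a positive right-hand side, the
L1 history being a combination of earlier values with the nonnegative weights `b_k` and
`b_{j-1} - b_j` (the increments of the concave `x ↦ x ^ (1 - α)`). Summing the three equations
over the grid, the Neumann conditions cancel the diffusion and the infection terms cancel
between `S` and `I`, so the total population satisfies
`(1 + g μ̃) G^{k+1} ≤ (L1 history of G) + g λ (M + 1)`. Since the history weights sum to one,
induction keeps every `G^{k+1}` below `(g λ (M + 1) + G^0) / (g μ̃)`, which is at most the bound.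
-/

lemma bcoef_zero {b : ℝ} (hb : b ≠ 0) : bcoef b 0 = 1 := by
  simp [bcoef, Real.zero_rpow hb]

lemma bcoef_pos {b : ℝ} (hb : 0 < b) (j : ℕ) : 0 < bcoef b j :=
  sub_pos.2 (Real.rpow_lt_rpow j.cast_nonneg (lt_add_one _) hb)

/-- The increments of the concave function `x ↦ x ^ b` decrease. -/
lemma bcoef_antitone {b : ℝ} (hb₀ : 0 ≤ b) (hb₁ : b ≤ 1) : Antitone (bcoef b) := by
  refine antitone_nat_of_succ_le fun j => ?_
  have hmid := (Real.concaveOn_rpow hb₀ hb₁).2 (Set.mem_Ici.2 j.cast_nonneg)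
    (Set.mem_Ici.2 (by positivity : (0 : ℝ) ≤ j + 2)) (by norm_num : (0 : ℝ) ≤ 1 / 2)
    (by norm_num : (0 : ℝ) ≤ 1 / 2) (by norm_num)
  have hj : (1 / 2 : ℝ) • (j : ℝ) + (1 / 2 : ℝ) • ((j : ℝ) + 2) = j + 1 := by
    simp only [smul_eq_mul]; ring
  rw [hj, smul_eq_mul, smul_eq_mul] at hmid
  simp only [bcoef, Nat.cast_add, Nat.cast_one, add_assoc, one_add_one_eq_two]
  linarith

lemma bcoef_le_one {b : ℝ} (hb₀ : 0 < b) (hb₁ : b ≤ 1) (j : ℕ) : bcoef b j ≤ 1 :=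
  bcoef_zero hb₀.ne' ▸ bcoef_antitone hb₀.le hb₁ j.zero_le

lemma sum_Icc_bcoef_sub (b : ℝ) (k : ℕ) :
    ∑ j ∈ Icc 1 k, (bcoef b (j - 1) - bcoef b j) = bcoef b 0 - bcoef b k := by
  induction k with
  | zero => simp
  | succ k ih =>
    rw [sum_Icc_succ_top (by omega), ih, Nat.add_sub_cancel]
    ring

/-- The history part of the L1 scheme: for `Δt > 0`,
`X (k + 1) - l1History (1 - α) X k = Γ(2 - α) * Δt ^ α * L1 α Δt X (k + 1)`. -/
noncomputable def l1History (b : ℝ) (X : ℕ → ℝ) (k : ℕ) : ℝ :=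
  bcoef b k * X 0 + ∑ j ∈ Icc 1 k, (bcoef b (j - 1) - bcoef b j) * X (k + 1 - j)

section l1History

variable {b : ℝ} {X Y Z : ℕ → ℝ} {k : ℕ}

lemma l1History_add_add :
    l1History b (fun m => X m + Y m + Z m) k =
      l1History b X k + l1History b Y k + l1History b Z k := by
  simp only [l1History, mul_add, sum_add_distrib]
  ring

lemma sum_l1History {ι : Type*} (s : Finset ι) (X : ℕ → ι → ℝ) :
    ∑ i ∈ s, l1History b (fun m => X m i) k = l1History b (fun m => ∑ i ∈ s, X m i) k := by
  simp only [l1History, sum_add_distrib, mul_sum]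
  rw [sum_comm]

lemma l1History_pos (hb₀ : 0 < b) (hb₁ : b ≤ 1) (hX₀ : 0 < X 0) (hX : ∀ m ≤ k, 0 ≤ X m) :
    0 < l1History b X k :=
  add_pos_of_pos_of_nonneg (mul_pos (bcoef_pos hb₀ k) hX₀) <| sum_nonneg fun j hj =>
    mul_nonneg (sub_nonneg.2 (bcoef_antitone hb₀.le hb₁ (j.sub_le 1)))
      (hX _ (by have := mem_Icc.1 hj; omega))

lemma l1History_le (hb₀ : 0 < b) (hb₁ : b ≤ 1) {W : ℝ}
    (hX : ∀ m, 1 ≤ m → m ≤ k → X m ≤ W) :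
    l1History b X k ≤ bcoef b k * X 0 + (1 - bcoef b k) * W := by
  have hsum : ∑ j ∈ Icc 1 k, (bcoef b (j - 1) - bcoef b j) * X (k + 1 - j) ≤
      ∑ j ∈ Icc 1 k, (bcoef b (j - 1) - bcoef b j) * W := by
    refine sum_le_sum fun j hj => ?_
    have hj := mem_Icc.1 hj
    exact mul_le_mul_of_nonneg_left (hX _ (by omega) (by omega))
      (sub_nonneg.2 (bcoef_antitone hb₀.le hb₁ (j.sub_le 1)))
  rw [← sum_mul, sum_Icc_bcoef_sub, bcoef_zero hb₀.ne'] at hsum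
  unfold l1History
  linarith

/-- Discrete Gronwall inequality for the L1 scheme: the weights of `l1History` are nonnegative
and sum to one, so the level `(C + G 0) / a` is never exceeded. -/
lemma le_of_le_l1History {a C : ℝ} {G : ℕ → ℝ} (hb₀ : 0 < b) (hb₁ : b ≤ 1) (ha : 0 < a)
    (hC : 0 ≤ C) (hG₀ : 0 ≤ G 0) (hG : ∀ k, (1 + a) * G (k + 1) ≤ l1History b G k + C)
    (k : ℕ) : G (k + 1) ≤ (C + G 0) / a := by
  induction k using Nat.strong_induction_on with
  | _ k ih =>
    set W := (C + G 0) / a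
    have haW : a * W = C + G 0 := mul_div_cancel₀ _ ha.ne'
    have hW : 0 ≤ W := by positivity
    have hhist := l1History_le hb₀ hb₁ (X := G) (k := k) (W := W) fun m hm hmk => by
      obtain ⟨i, rfl⟩ := Nat.exists_eq_add_of_le' hm
      exact ih i (by omega)
    have hbk := bcoef_le_one hb₀ hb₁ k
    have hbk₀ := (bcoef_pos hb₀ k).le
    have : (1 + a) * G (k + 1) ≤ (1 + a) * W := by
      nlinarith [hG k, mul_nonneg hbk₀ hW, mul_nonneg (sub_nonneg.2 hbk) hG₀]
    exact le_of_mul_le_mul_left this (by linarith)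

end l1History

def discreteLaplacian (X : ℤ → ℝ) (n : ℤ) : ℝ := X (n - 1) - 2 * X n + X (n + 1)

/-- Discrete Neumann condition on the grid `{0, …, M}` through the ghost points `-1`, `M + 1`. -/
def IsNeumann (M : ℕ) (X : ℤ → ℝ) : Prop := X (-1) = X 0 ∧ X ((M : ℤ) + 1) = X (M : ℤ)

lemma sum_Icc_sub_succ (M : ℕ) (F : ℤ → ℝ) :
    ∑ n ∈ Icc (0 : ℤ) M, (F (n + 1) - F n) = F ((M : ℤ) + 1) - F 0 := by
  induction M with
  | zero => simp
  | succ M ih =>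
    rw [Nat.cast_succ, ← insert_Icc_right_eq_Icc_add_one (by omega), sum_insert (by simp), ih]
    ring

namespace IsNeumann

variable {M : ℕ} {X : ℤ → ℝ}

lemma sum_discreteLaplacian (hX : IsNeumann M X) :
    ∑ n ∈ Icc (0 : ℤ) M, discreteLaplacian X n = 0 := by
  have hback := sum_Icc_sub_succ M fun n => X (n - 1)
  simp only [add_sub_cancel_right, zero_sub] at hback
  calc ∑ n ∈ Icc (0 : ℤ) M, discreteLaplacian X n
      = ∑ n ∈ Icc (0 : ℤ) M, ((X (n + 1) - X n) - (X n - X (n - 1))) :=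
        sum_congr rfl fun n _ => by unfold discreteLaplacian; ring
    _ = 0 := by
        rw [sum_sub_distrib, sum_Icc_sub_succ, hback, hX.1, hX.2]
        ring

lemma sum_eq_of_sub_discreteLaplacian_eq {ρ : ℝ} {Q : ℤ → ℝ} (hX : IsNeumann M X)
    (h : ∀ n : ℤ, 0 ≤ n → n ≤ (M : ℤ) → X n - ρ * discreteLaplacian X n = Q n) :
    ∑ n ∈ Icc (0 : ℤ) M, X n = ∑ n ∈ Icc (0 : ℤ) M, Q n := by
  rw [← sum_congr rfl fun n hn => h n (mem_Icc.1 hn).1 (mem_Icc.1 hn).2, sum_sub_distrib,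
    ← mul_sum, hX.sum_discreteLaplacian, mul_zero, sub_zero]

/-- Reflection through the ghost points makes a grid minimum a minimum of both neighbours. -/
lemma discreteLaplacian_nonneg_of_min {n₀ : ℤ} (hX : IsNeumann M X)
    (hn₀ : n₀ ∈ Icc (0 : ℤ) M) (hmin : ∀ n ∈ Icc (0 : ℤ) M, X n₀ ≤ X n) :
    0 ≤ discreteLaplacian X n₀ := by
  have hmin' : ∀ n : ℤ, 0 ≤ n → n ≤ M → X n₀ ≤ X n := fun n h₀ h₁ =>
    hmin n (mem_Icc.2 ⟨h₀, h₁⟩)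
  obtain ⟨h₀, h₁⟩ := mem_Icc.1 hn₀
  have hleft : X n₀ ≤ X (n₀ - 1) := by
    rcases h₀.eq_or_lt with rfl | h₀
    · exact (zero_sub (1 : ℤ)).symm ▸ hX.1.symm.le
    · exact hmin' _ (by omega) (by omega)
  have hright : X n₀ ≤ X (n₀ + 1) := by
    rcases h₁.eq_or_lt with rfl | h₁
    · exact hX.2.symm.le
    · exact hmin' _ (by omega) (by omega)
  unfold discreteLaplacian
  linarith

/-- Discrete minimum principle for one implicit reaction–diffusion step. -/
lemma pos_of_pos_sub_discreteLaplacian {ρ : ℝ} {c : ℤ → ℝ} (hX : IsNeumann M X) (hρ : 0 ≤ ρ)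
    (hc : ∀ n : ℤ, 0 ≤ n → n ≤ (M : ℤ) → 0 ≤ c n)
    (h : ∀ n : ℤ, 0 ≤ n → n ≤ (M : ℤ) → 0 < X n - ρ * discreteLaplacian X n + c n * X n)
    (n : ℤ) (h₀ : 0 ≤ n) (h₁ : n ≤ (M : ℤ)) : 0 < X n := by
  obtain ⟨n₀, hn₀, hmin⟩ := exists_min_image (Icc (0 : ℤ) M) X ⟨0, by simp⟩
  have hlap := hX.discreteLaplacian_nonneg_of_min hn₀ hmin
  obtain ⟨hn₀₀, hn₀₁⟩ := mem_Icc.1 hn₀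
  have hpos : 0 < (1 + c n₀) * X n₀ := by
    nlinarith [h n₀ hn₀₀ hn₀₁, mul_nonneg hρ hlap]
  have hX₀ : 0 < X n₀ := pos_of_mul_pos_right hpos (by linarith [hc n₀ hn₀₀ hn₀₁])
  exact hX₀.trans_le (hmin n (mem_Icc.2 ⟨h₀, h₁⟩))

end IsNeumann

/-- System (6) with `b = 1 - α`, `g = Γ(2 - α) (Δt)^α` and `ρᵢ = rᵢ = dᵢ g / (Δx)²`. -/
structure IsDiscreteSIR (f : ℝ → ℝ) (M : ℕ) (b g ρ₁ ρ₂ ρ₃ lam β γ μ r δ : ℝ)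
    (S I R : ℕ → ℤ → ℝ) : Prop where
  S_eq : ∀ (k : ℕ) (n : ℤ), 0 ≤ n → n ≤ (M : ℤ) →
    S (k + 1) n - ρ₁ * discreteLaplacian (S (k + 1)) n =
      l1History b (fun m => S m n) k +
        g * (lam - β * S (k + 1) n * f (I k n) - γ * S (k + 1) n)
  I_eq : ∀ (k : ℕ) (n : ℤ), 0 ≤ n → n ≤ (M : ℤ) →
    I (k + 1) n - ρ₂ * discreteLaplacian (I (k + 1)) n =
      l1History b (fun m => I m n) k +
        g * (β * S (k + 1) n * f (I k n) - (μ + r) * I (k + 1) n)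
  R_eq : ∀ (k : ℕ) (n : ℤ), 0 ≤ n → n ≤ (M : ℤ) →
    R (k + 1) n - ρ₃ * discreteLaplacian (R (k + 1)) n =
      l1History b (fun m => R m n) k + g * (r * I (k + 1) n - δ * R (k + 1) n)
  S_neumann : ∀ k, IsNeumann M (S k)
  I_neumann : ∀ k, IsNeumann M (I k)
  R_neumann : ∀ k, IsNeumann M (R k)

noncomputable def totalPopulation (M : ℕ) (S I R : ℕ → ℤ → ℝ) (k : ℕ) : ℝ :=
  ∑ n ∈ Icc (0 : ℤ) M, (S k n + I k n + R k n)

namespace IsDiscreteSIR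

variable {f : ℝ → ℝ} {M : ℕ} {b g ρ₁ ρ₂ ρ₃ lam β γ μ r δ : ℝ} {S I R : ℕ → ℤ → ℝ}

theorem pos_succ (h : IsDiscreteSIR f M b g ρ₁ ρ₂ ρ₃ lam β γ μ r δ S I R)
    (hf : ∀ y, 0 ≤ y → 0 ≤ f y) (hb₀ : 0 < b) (hb₁ : b ≤ 1) (hg : 0 ≤ g)
    (hρ₁ : 0 ≤ ρ₁) (hρ₂ : 0 ≤ ρ₂) (hρ₃ : 0 ≤ ρ₃) (hlam : 0 ≤ lam) (hβ : 0 ≤ β) (hγ : 0 ≤ γ)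
    (hμ : 0 ≤ μ) (hr : 0 ≤ r) (hδ : 0 ≤ δ) {k : ℕ}
    (hpast : ∀ m ≤ k, ∀ n : ℤ, 0 ≤ n → n ≤ (M : ℤ) → 0 < S m n ∧ 0 < I m n ∧ 0 < R m n)
    (n : ℤ) (h₀ : 0 ≤ n) (h₁ : n ≤ (M : ℤ)) :
    0 < S (k + 1) n ∧ 0 < I (k + 1) n ∧ 0 < R (k + 1) n := by
  have hhist : ∀ n : ℤ, 0 ≤ n → n ≤ (M : ℤ) → 0 < l1History b (fun m => S m n) k ∧
      0 < l1History b (fun m => I m n) k ∧ 0 < l1History b (fun m => R m n) k :=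
    fun n h₀ h₁ =>
      have hpast' := fun m (hm : m ≤ k) => hpast m hm n h₀ h₁
      have hinit := hpast' 0 k.zero_le
      ⟨l1History_pos hb₀ hb₁ hinit.1 fun m hm => (hpast' m hm).1.le,
        l1History_pos hb₀ hb₁ hinit.2.1 fun m hm => (hpast' m hm).2.1.le,
        l1History_pos hb₀ hb₁ hinit.2.2 fun m hm => (hpast' m hm).2.2.le⟩
  have hIk : ∀ n : ℤ, 0 ≤ n → n ≤ (M : ℤ) → 0 ≤ f (I k n) := fun n h₀ h₁ =>
    hf _ (hpast k le_rfl n h₀ h₁).2.1.le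
  have hS : ∀ n : ℤ, 0 ≤ n → n ≤ (M : ℤ) → 0 < S (k + 1) n := by
    refine (h.S_neumann (k + 1)).pos_of_pos_sub_discreteLaplacian hρ₁
      (c := fun n => g * (β * f (I k n) + γ))
      (fun n h₀ h₁ => mul_nonneg hg (add_nonneg (mul_nonneg hβ (hIk n h₀ h₁)) hγ))
      fun n h₀ h₁ => ?_
    exact (add_pos_of_pos_of_nonneg (hhist n h₀ h₁).1 (mul_nonneg hg hlam)).trans_eq
      (by linear_combination -h.S_eq k n h₀ h₁)
  have hI : ∀ n : ℤ, 0 ≤ n → n ≤ (M : ℤ) → 0 < I (k + 1) n := by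
    refine (h.I_neumann (k + 1)).pos_of_pos_sub_discreteLaplacian hρ₂
      (c := fun _ => g * (μ + r)) (fun _ _ _ => mul_nonneg hg (add_nonneg hμ hr))
      fun n h₀ h₁ => ?_
    exact (add_pos_of_pos_of_nonneg (hhist n h₀ h₁).2.1 <| mul_nonneg hg <|
      mul_nonneg (mul_nonneg hβ (hS n h₀ h₁).le) (hIk n h₀ h₁)).trans_eq
      (by linear_combination -h.I_eq k n h₀ h₁)
  have hR : ∀ n : ℤ, 0 ≤ n → n ≤ (M : ℤ) → 0 < R (k + 1) n := by
    refine (h.R_neumann (k + 1)).pos_of_pos_sub_discreteLaplacian hρ₃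
      (c := fun _ => g * δ) (fun _ _ _ => mul_nonneg hg hδ) fun n h₀ h₁ => ?_
    exact (add_pos_of_pos_of_nonneg (hhist n h₀ h₁).2.2 <| mul_nonneg hg <|
      mul_nonneg hr (hI n h₀ h₁).le).trans_eq (by linear_combination -h.R_eq k n h₀ h₁)
  exact ⟨hS n h₀ h₁, hI n h₀ h₁, hR n h₀ h₁⟩

theorem pos (h : IsDiscreteSIR f M b g ρ₁ ρ₂ ρ₃ lam β γ μ r δ S I R)
    (hf : ∀ y, 0 ≤ y → 0 ≤ f y) (hb₀ : 0 < b) (hb₁ : b ≤ 1) (hg : 0 ≤ g)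
    (hρ₁ : 0 ≤ ρ₁) (hρ₂ : 0 ≤ ρ₂) (hρ₃ : 0 ≤ ρ₃) (hlam : 0 ≤ lam) (hβ : 0 ≤ β) (hγ : 0 ≤ γ)
    (hμ : 0 ≤ μ) (hr : 0 ≤ r) (hδ : 0 ≤ δ)
    (hS₀ : ∀ n : ℤ, 0 ≤ n → n ≤ (M : ℤ) → 0 < S 0 n)
    (hI₀ : ∀ n : ℤ, 0 ≤ n → n ≤ (M : ℤ) → 0 < I 0 n)
    (hR₀ : ∀ n : ℤ, 0 ≤ n → n ≤ (M : ℤ) → 0 < R 0 n) (k : ℕ) :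
    ∀ n : ℤ, 0 ≤ n → n ≤ (M : ℤ) → 0 < S k n ∧ 0 < I k n ∧ 0 < R k n := by
  induction k using Nat.strong_induction_on with
  | _ k ih =>
    cases k with
    | zero => exact fun n h₀ h₁ => ⟨hS₀ n h₀ h₁, hI₀ n h₀ h₁, hR₀ n h₀ h₁⟩
    | succ k =>
      exact h.pos_succ hf hb₀ hb₁ hg hρ₁ hρ₂ hρ₃ hlam hβ hγ hμ hr hδ fun m hm =>
        ih m (Nat.lt_succ_of_le hm)

theorem totalPopulation_succ (h : IsDiscreteSIR f M b g ρ₁ ρ₂ ρ₃ lam β γ μ r δ S I R)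
    (k : ℕ) : totalPopulation M S I R (k + 1) = l1History b (totalPopulation M S I R) k +
      ∑ n ∈ Icc (0 : ℤ) M,
        g * (lam - (γ * S (k + 1) n + μ * I (k + 1) n + δ * R (k + 1) n)) := by
  have hS := (h.S_neumann (k + 1)).sum_eq_of_sub_discreteLaplacian_eq (h.S_eq k)
  have hI := (h.I_neumann (k + 1)).sum_eq_of_sub_discreteLaplacian_eq (h.I_eq k)
  have hR := (h.R_neumann (k + 1)).sum_eq_of_sub_discreteLaplacian_eq (h.R_eq k)
  calc totalPopulation M S I R (k + 1)
      = ∑ n ∈ Icc (0 : ℤ) M, S (k + 1) n + ∑ n ∈ Icc (0 : ℤ) M, I (k + 1) n +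
          ∑ n ∈ Icc (0 : ℤ) M, R (k + 1) n := by
        simp only [totalPopulation, sum_add_distrib]
    _ = ∑ n ∈ Icc (0 : ℤ) M, (l1History b (fun m => S m n + I m n + R m n) k +
          g * (lam - (γ * S (k + 1) n + μ * I (k + 1) n + δ * R (k + 1) n))) := by
        rw [hS, hI, hR, ← sum_add_distrib, ← sum_add_distrib]
        exact sum_congr rfl fun n _ => by rw [l1History_add_add]; ring
    _ = _ := by rw [sum_add_distrib, sum_l1History]; rfl

theorem totalPopulation_succ_le (h : IsDiscreteSIR f M b g ρ₁ ρ₂ ρ₃ lam β γ μ r δ S I R)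
    (hg : 0 ≤ g) (k : ℕ)
    (hpos : ∀ n : ℤ, 0 ≤ n → n ≤ (M : ℤ) → 0 ≤ S (k + 1) n ∧ 0 ≤ I (k + 1) n ∧ 0 ≤ R (k + 1) n) :
    (1 + g * min μ (min γ δ)) * totalPopulation M S I R (k + 1) ≤
      l1History b (totalPopulation M S I R) k + g * lam * (M + 1) := by
  set m := min μ (min γ δ)
  have hloss : m * totalPopulation M S I R (k + 1) ≤
      ∑ n ∈ Icc (0 : ℤ) M, (γ * S (k + 1) n + μ * I (k + 1) n + δ * R (k + 1) n) := by
    rw [totalPopulation, mul_sum]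
    refine sum_le_sum fun n hn => ?_
    obtain ⟨hS, hI, hR⟩ := hpos n (mem_Icc.1 hn).1 (mem_Icc.1 hn).2
    have hmγ : m ≤ γ := (min_le_right _ _).trans (min_le_left _ _)
    have hmδ : m ≤ δ := (min_le_right _ _).trans (min_le_right _ _)
    nlinarith [min_le_left μ (min γ δ)]
  have hsum : ∑ n ∈ Icc (0 : ℤ) M,
        g * (lam - (γ * S (k + 1) n + μ * I (k + 1) n + δ * R (k + 1) n)) =
      g * lam * (M + 1) -
        g * ∑ n ∈ Icc (0 : ℤ) M, (γ * S (k + 1) n + μ * I (k + 1) n + δ * R (k + 1) n) := by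
    have hcard : (Icc (0 : ℤ) M).card = M + 1 := by simp
    rw [← mul_sum, sum_sub_distrib, sum_const, hcard, nsmul_eq_mul]
    push_cast
    ring
  have htotal := h.totalPopulation_succ k
  rw [hsum] at htotal
  nlinarith [mul_le_mul_of_nonneg_left hloss hg]

end IsDiscreteSIR

theorem stmt_12_general
    (f : ℝ → ℝ) (hfnn : ∀ y : ℝ, 0 ≤ y → 0 ≤ f y)
    (M : ℕ)
    (α Δt Δx d1 d2 d3 lam β γ μ r δ : ℝ)
    (hα0 : 0 < α) (hα1 : α < 1) (hΔt : 0 < Δt)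
    (hd1 : 0 < d1) (hd2 : 0 < d2) (hd3 : 0 < d3)
    (hlam : 0 < lam) (hβ : 0 < β) (hγ : 0 < γ) (hμ : 0 < μ) (hr : 0 < r) (hδ : 0 < δ)
    (S I R : ℕ → ℤ → ℝ)
    (hS : ∀ (k : ℕ) (n : ℤ), 0 ≤ n → n ≤ (M : ℤ) →
      S (k + 1) n - d1 * Real.Gamma (2 - α) * Δt ^ α / Δx ^ 2 *
          (S (k + 1) (n - 1) - 2 * S (k + 1) n + S (k + 1) (n + 1)) =
        bcoef (1 - α) k * S 0 n +
          (∑ j ∈ Finset.Icc 1 k, (bcoef (1 - α) (j - 1) - bcoef (1 - α) j) * S (k + 1 - j) n) +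
          Real.Gamma (2 - α) * Δt ^ α *
            (lam - β * S (k + 1) n * f (I k n) - γ * S (k + 1) n))
    (hI : ∀ (k : ℕ) (n : ℤ), 0 ≤ n → n ≤ (M : ℤ) →
      I (k + 1) n - d2 * Real.Gamma (2 - α) * Δt ^ α / Δx ^ 2 *
          (I (k + 1) (n - 1) - 2 * I (k + 1) n + I (k + 1) (n + 1)) =
        bcoef (1 - α) k * I 0 n +
          (∑ j ∈ Finset.Icc 1 k, (bcoef (1 - α) (j - 1) - bcoef (1 - α) j) * I (k + 1 - j) n) +
          Real.Gamma (2 - α) * Δt ^ α *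
            (β * S (k + 1) n * f (I k n) - (μ + r) * I (k + 1) n))
    (hR : ∀ (k : ℕ) (n : ℤ), 0 ≤ n → n ≤ (M : ℤ) →
      R (k + 1) n - d3 * Real.Gamma (2 - α) * Δt ^ α / Δx ^ 2 *
          (R (k + 1) (n - 1) - 2 * R (k + 1) n + R (k + 1) (n + 1)) =
        bcoef (1 - α) k * R 0 n +
          (∑ j ∈ Finset.Icc 1 k, (bcoef (1 - α) (j - 1) - bcoef (1 - α) j) * R (k + 1 - j) n) +
          Real.Gamma (2 - α) * Δt ^ α *
            (r * I (k + 1) n - δ * R (k + 1) n))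
    (hSbc : ∀ k : ℕ, S k (-1) = S k 0 ∧ S k ((M : ℤ) + 1) = S k (M : ℤ))
    (hIbc : ∀ k : ℕ, I k (-1) = I k 0 ∧ I k ((M : ℤ) + 1) = I k (M : ℤ))
    (hRbc : ∀ k : ℕ, R k (-1) = R k 0 ∧ R k ((M : ℤ) + 1) = R k (M : ℤ))
    (hSinit : ∀ n : ℤ, 0 ≤ n → n ≤ (M : ℤ) → 0 < S 0 n)
    (hIinit : ∀ n : ℤ, 0 ≤ n → n ≤ (M : ℤ) → 0 < I 0 n)
    (hRinit : ∀ n : ℤ, 0 ≤ n → n ≤ (M : ℤ) → 0 < R 0 n)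
    :
    Filter.limsup
        (fun k : ℕ => ∑ n ∈ Finset.Icc (0 : ℤ) (M : ℤ), (S k n + I k n + R k n))
        Filter.atTop ≤
      (Real.Gamma (2 - α) * Δt ^ α * lam * ((M : ℝ) + 1) +
          ∑ n ∈ Finset.Icc (0 : ℤ) (M : ℤ), (S 0 n + I 0 n + R 0 n)) *
        (1 + Real.Gamma (2 - α) * Δt ^ α * min μ (min γ δ)) /
        (Real.Gamma (2 - α) * Δt ^ α * min μ (min γ δ)) ^ 2 := by
  set g := Real.Gamma (2 - α) * Δt ^ α
  have hg : 0 < g := mul_pos (Real.Gamma_pos_of_pos (by linarith)) (Real.rpow_pos_of_pos hΔt α)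
  have hρ : ∀ d : ℝ, 0 < d → 0 ≤ d * Real.Gamma (2 - α) * Δt ^ α / Δx ^ 2 := fun d hd =>
    div_nonneg (by simpa only [mul_assoc] using mul_nonneg hd.le hg.le) (sq_nonneg Δx)
  have hb₀ : 0 < 1 - α := by linarith
  have hsol : IsDiscreteSIR f M (1 - α) g _ _ _ lam β γ μ r δ S I R :=
    ⟨hS, hI, hR, hSbc, hIbc, hRbc⟩
  have hpos := hsol.pos hfnn hb₀ (by linarith) hg.le (hρ d1 hd1) (hρ d2 hd2) (hρ d3 hd3)
    hlam.le hβ.le hγ.le hμ.le hr.le hδ.le hSinit hIinit hRinit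
  have htotal_nonneg : ∀ k, 0 ≤ totalPopulation M S I R k := fun k =>
    sum_nonneg fun n hn => by
      obtain ⟨hSk, hIk, hRk⟩ := hpos k n (mem_Icc.1 hn).1 (mem_Icc.1 hn).2
      positivity
  have ha : 0 < g * min μ (min γ δ) := mul_pos hg (lt_min hμ (lt_min hγ hδ))
  have hbound := le_of_le_l1History hb₀ (by linarith) ha (by positivity) (htotal_nonneg 0)
    fun k => hsol.totalPopulation_succ_le hg.le k fun n h₀ h₁ =>
      (hpos (k + 1) n h₀ h₁).imp (·.le) (And.imp (·.le) (·.le))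
  calc limsup (totalPopulation M S I R) atTop
      ≤ (g * lam * (M + 1) + totalPopulation M S I R 0) / (g * min μ (min γ δ)) :=
        limsup_le_of_le (isCoboundedUnder_le_of_le atTop htotal_nonneg) <|
          eventually_atTop.2 ⟨1, fun k hk => Nat.sub_add_cancel hk ▸ hbound (k - 1)⟩
    _ ≤ (g * lam * (M + 1) + totalPopulation M S I R 0) * (1 + g * min μ (min γ δ)) /
          (g * min μ (min γ δ)) ^ 2 := by
        have hC : 0 ≤ g * lam * (M + 1) + totalPopulation M S I R 0 := by
          have := htotal_nonneg 0
          positivity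
        rw [div_le_div_iff₀ ha (by positivity)]
        nlinarith [mul_nonneg hC ha.le]

/-- Theorem 3.1, eventual uniform boundedness of the total population. -/
theorem stmt_12
    (f : ℝ → ℝ) (hfc : Continuous f) (hf0 : f 0 = 0) (hfnn : ∀ y : ℝ, 0 ≤ y → 0 ≤ f y)
    (M : ℕ) (hM : 1 ≤ M)
    (α Δt Δx d1 d2 d3 lam β γ μ r δ : ℝ)
    (hα0 : 0 < α) (hα1 : α < 1) (hΔt : 0 < Δt) (hΔx : 0 < Δx)
    (hd1 : 0 < d1) (hd2 : 0 < d2) (hd3 : 0 < d3)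
    (hlam : 0 < lam) (hβ : 0 < β) (hγ : 0 < γ) (hμ : 0 < μ) (hr : 0 < r) (hδ : 0 < δ)
    (S I R : ℕ → ℤ → ℝ)
    (hS : ∀ (k : ℕ) (n : ℤ), 0 ≤ n → n ≤ (M : ℤ) →
      S (k + 1) n - d1 * Real.Gamma (2 - α) * Δt ^ α / Δx ^ 2 *
          (S (k + 1) (n - 1) - 2 * S (k + 1) n + S (k + 1) (n + 1)) =
        bcoef (1 - α) k * S 0 n +
          (∑ j ∈ Finset.Icc 1 k, (bcoef (1 - α) (j - 1) - bcoef (1 - α) j) * S (k + 1 - j) n) +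
          Real.Gamma (2 - α) * Δt ^ α *
            (lam - β * S (k + 1) n * f (I k n) - γ * S (k + 1) n))
    (hI : ∀ (k : ℕ) (n : ℤ), 0 ≤ n → n ≤ (M : ℤ) →
      I (k + 1) n - d2 * Real.Gamma (2 - α) * Δt ^ α / Δx ^ 2 *
          (I (k + 1) (n - 1) - 2 * I (k + 1) n + I (k + 1) (n + 1)) =
        bcoef (1 - α) k * I 0 n +
          (∑ j ∈ Finset.Icc 1 k, (bcoef (1 - α) (j - 1) - bcoef (1 - α) j) * I (k + 1 - j) n) +
          Real.Gamma (2 - α) * Δt ^ α *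
            (β * S (k + 1) n * f (I k n) - (μ + r) * I (k + 1) n))
    (hR : ∀ (k : ℕ) (n : ℤ), 0 ≤ n → n ≤ (M : ℤ) →
      R (k + 1) n - d3 * Real.Gamma (2 - α) * Δt ^ α / Δx ^ 2 *
          (R (k + 1) (n - 1) - 2 * R (k + 1) n + R (k + 1) (n + 1)) =
        bcoef (1 - α) k * R 0 n +
          (∑ j ∈ Finset.Icc 1 k, (bcoef (1 - α) (j - 1) - bcoef (1 - α) j) * R (k + 1 - j) n) +
          Real.Gamma (2 - α) * Δt ^ α *
            (r * I (k + 1) n - δ * R (k + 1) n))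
    (hSbc : ∀ k : ℕ, S k (-1) = S k 0 ∧ S k ((M : ℤ) + 1) = S k (M : ℤ))
    (hIbc : ∀ k : ℕ, I k (-1) = I k 0 ∧ I k ((M : ℤ) + 1) = I k (M : ℤ))
    (hRbc : ∀ k : ℕ, R k (-1) = R k 0 ∧ R k ((M : ℤ) + 1) = R k (M : ℤ))
    (hSinit : ∀ n : ℤ, 0 ≤ n → n ≤ (M : ℤ) → 0 < S 0 n)
    (hIinit : ∀ n : ℤ, 0 ≤ n → n ≤ (M : ℤ) → 0 < I 0 n)
    (hRinit : ∀ n : ℤ, 0 ≤ n → n ≤ (M : ℤ) → 0 < R 0 n)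
    :
    Filter.limsup
        (fun k : ℕ => ∑ n ∈ Finset.Icc (0 : ℤ) (M : ℤ), (S k n + I k n + R k n))
        Filter.atTop ≤
      (Real.Gamma (2 - α) * Δt ^ α * lam * ((M : ℝ) + 1) +
          ∑ n ∈ Finset.Icc (0 : ℤ) (M : ℤ), (S 0 n + I 0 n + R 0 n)) *
        (1 + Real.Gamma (2 - α) * Δt ^ α * min μ (min γ δ)) /
        (Real.Gamma (2 - α) * Δt ^ α * min μ (min γ δ)) ^ 2 :=
  stmt_12_general f hfnn M α Δt Δx d1 d2 d3 lam β γ μ r δ hα0 hα1 hΔt hd1 hd2 hd3 hlam hβ hγ hμ hr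
    hδ S I R hS hI hR hSbc hIbc hRbc hSinit hIinit hRinit
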